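/- arXiv:2103.01788 — 2 statements merged into one kernel-verified Lean document; each statement's English description precedes it below -/
import Mathlib

section
/- Let V be a real inner product space with norm ‖·‖. Suppose χ ∈ V can be written as χ = Σ_{î∈Î} χ_î (finite sum), and suppose there is a family {w_i}_{i∈I} in V and real numbers m_i such that ⟨χ_î, w_i⟩ = 0 for all pairs (î,i) outside a set S, with #{i : (î,i) ∈ S} ≤ C_ol for each î and #{î : (î,i) ∈ S} ≤ C_ol for each i, and ‖χ‖² = Σ_{(î,i)∈S} m_i ⟨χ_î, w_i⟩. If additionally Σ_î ‖χ_î‖² ≤ C ‖χ‖², then ‖χ‖² ≤ 2 C C_ol² Σ_{i∈I} m_i² ‖w_i‖². -/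
open scoped RealInnerProductSpace
open Classical

/-!
Bound each interaction `m_i ⟪χ_î, w_i⟫` by `‖χ_î‖ · |m_i| ‖w_i‖` and apply the discrete
Cauchy–Schwarz inequality over `S`; each `χ_î` and each `w_i` occurs in at most `C_ol` pairs, so
`‖χ‖⁴ ≤ C_ol² (Σ ‖χ_î‖²)(Σ m_i² ‖w_i‖²) ≤ C C_ol² ‖χ‖² Σ m_i² ‖w_i‖²`, and one divides by `‖χ‖²`.
-/

lemma Finset.sum_comp_le_mul_sum_of_card_fiber_le {α β : Type*} [Fintype β] (s : Finset α)
    (g : α → β) {f : β → ℝ} (hf : ∀ b, 0 ≤ f b) {n : ℕ}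
    (hn : ∀ b, (s.filter fun a => g a = b).card ≤ n) :
    ∑ a ∈ s, f (g a) ≤ n * ∑ b, f b := by
  rw [← Finset.sum_fiberwise s g (fun a => f (g a)), Finset.mul_sum]
  refine Finset.sum_le_sum fun b _ => ?_
  rw [Finset.sum_congr rfl fun a ha => by rw [(Finset.mem_filter.1 ha).2], Finset.sum_const,
    nsmul_eq_mul]
  exact mul_le_mul_of_nonneg_right (by exact_mod_cast hn b) (hf b)

lemma abs_mul_inner_le {V : Type*} [NormedAddCommGroup V] [InnerProductSpace ℝ V]
    (a : ℝ) (x y : V) : |a * ⟪x, y⟫| ≤ ‖x‖ * (|a| * ‖y‖) :=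
  calc |a * ⟪x, y⟫| = |a| * |⟪x, y⟫| := abs_mul _ _
    _ ≤ |a| * (‖x‖ * ‖y‖) := by gcongr; exact abs_real_inner_le_norm x y
    _ = ‖x‖ * (|a| * ‖y‖) := by ring

theorem sq_sum_inner_le_of_sparse {V : Type*} [NormedAddCommGroup V] [InnerProductSpace ℝ V]
    {J I : Type*} [Fintype J] [Fintype I] (x : J → V) (w : I → V) (m : I → ℝ)
    (S : Finset (J × I)) {r c : ℕ}
    (hrow : ∀ j, (S.filter fun p => p.1 = j).card ≤ r)
    (hcol : ∀ i, (S.filter fun p => p.2 = i).card ≤ c) :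
    (∑ p ∈ S, m p.2 * ⟪x p.1, w p.2⟫) ^ 2 ≤
      (r * ∑ j, ‖x j‖ ^ 2) * (c * ∑ i, m i ^ 2 * ‖w i‖ ^ 2) := by
  have habs : |∑ p ∈ S, m p.2 * ⟪x p.1, w p.2⟫| ≤ ∑ p ∈ S, ‖x p.1‖ * (|m p.2| * ‖w p.2‖) :=
    (Finset.abs_sum_le_sum_abs _ _).trans
      (Finset.sum_le_sum fun p _ => abs_mul_inner_le _ _ _)
  have hrows : ∑ p ∈ S, ‖x p.1‖ ^ 2 ≤ r * ∑ j, ‖x j‖ ^ 2 :=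
    S.sum_comp_le_mul_sum_of_card_fiber_le Prod.fst (f := fun j => ‖x j‖ ^ 2)
      (fun _ => sq_nonneg _) hrow
  have hcols : ∑ p ∈ S, (|m p.2| * ‖w p.2‖) ^ 2 ≤ c * ∑ i, m i ^ 2 * ‖w i‖ ^ 2 := by
    simp only [mul_pow, sq_abs]
    exact S.sum_comp_le_mul_sum_of_card_fiber_le Prod.snd (f := fun i => m i ^ 2 * ‖w i‖ ^ 2)
      (fun _ => by positivity) hcol
  calc (∑ p ∈ S, m p.2 * ⟪x p.1, w p.2⟫) ^ 2
      ≤ (∑ p ∈ S, ‖x p.1‖ * (|m p.2| * ‖w p.2‖)) ^ 2 := by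
        rw [← sq_abs]; exact pow_le_pow_left₀ (abs_nonneg _) habs 2
    _ ≤ (∑ p ∈ S, ‖x p.1‖ ^ 2) * ∑ p ∈ S, (|m p.2| * ‖w p.2‖) ^ 2 :=
        Finset.sum_mul_sq_le_sq_mul_sq _ _ _
    _ ≤ (r * ∑ j, ‖x j‖ ^ 2) * (c * ∑ i, m i ^ 2 * ‖w i‖ ^ 2) := by gcongr

theorem stmt_10_general {V : Type*} [NormedAddCommGroup V] [InnerProductSpace ℝ V]
    {Ihat I : Type*} [Fintype Ihat] [Fintype I]
    (χ : V) (χhat : Ihat → V) (w : I → V) (m : I → ℝ)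
    (S : Finset (Ihat × I)) (Col : ℕ) (C : ℝ) (hC : 0 < C)
    (hrow : ∀ ih, (S.filter (fun p => p.1 = ih)).card ≤ Col)
    (hcol : ∀ i, (S.filter (fun p => p.2 = i)).card ≤ Col)
    (hsum : ‖χ‖ ^ 2 = ∑ p ∈ S, m p.2 * ⟪χhat p.1, w p.2⟫)
    (hstab : ∑ ih, ‖χhat ih‖ ^ 2 ≤ C * ‖χ‖ ^ 2) :
    ‖χ‖ ^ 2 ≤ 2 * C * (Col : ℝ) ^ 2 * ∑ i, m i ^ 2 * ‖w i‖ ^ 2 := by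
  set T := ∑ i, m i ^ 2 * ‖w i‖ ^ 2
  have hT : 0 ≤ T := Finset.sum_nonneg fun i _ => by positivity
  have hsq : (‖χ‖ ^ 2) ^ 2 ≤ (C * Col ^ 2 * T) * ‖χ‖ ^ 2 := by
    calc (‖χ‖ ^ 2) ^ 2 ≤ (Col * ∑ ih, ‖χhat ih‖ ^ 2) * (Col * T) :=
          hsum ▸ sq_sum_inner_le_of_sparse χhat w m S hrow hcol
      _ ≤ (Col * (C * ‖χ‖ ^ 2)) * (Col * T) := by gcongr
      _ = (C * Col ^ 2 * T) * ‖χ‖ ^ 2 := by ring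
  have hbound : ‖χ‖ ^ 2 ≤ C * Col ^ 2 * T := by
    rcases (sq_nonneg ‖χ‖).eq_or_lt with hzero | hpos
    · rw [← hzero]; positivity
    · exact le_of_mul_le_mul_right (by simpa only [sq] using hsq) hpos
  linarith [show 0 ≤ C * Col ^ 2 * T by positivity]

/-- Abstract form of the key estimate in the accuracy proof for localized
bases: if `χ = Σ_ih χ_ih`, the interactions `⟪χ_ih, w_i⟫` vanish outside a sparse
set `S` with row/column counts at most `C_ol`, `‖χ‖² = Σ_{(ih,i)∈S} m_i ⟪χ_ih, w_i⟫`,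
and the decomposition is stable, `Σ_ih ‖χ_ih‖² ≤ C ‖χ‖²`, then
`‖χ‖² ≤ 2 C C_ol² Σ_i m_i² ‖w_i‖²`. -/
theorem stmt_10 {V : Type*} [NormedAddCommGroup V] [InnerProductSpace ℝ V]
    {Ihat I : Type*} [Fintype Ihat] [Fintype I]
    (χ : V) (χhat : Ihat → V) (w : I → V) (m : I → ℝ)
    (S : Finset (Ihat × I)) (Col : ℕ) (C : ℝ) (hC : 0 < C) (hCol : 0 < Col)
    (hdecomp : χ = ∑ ih, χhat ih)
    (horth : ∀ ih i, (ih, i) ∉ S → ⟪χhat ih, w i⟫ = 0)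
    (hrow : ∀ ih, (S.filter (fun p => p.1 = ih)).card ≤ Col)
    (hcol : ∀ i, (S.filter (fun p => p.2 = i)).card ≤ Col)
    (hsum : ‖χ‖ ^ 2 = ∑ p ∈ S, m p.2 * ⟪χhat p.1, w p.2⟫)
    (hstab : ∑ ih, ‖χhat ih‖ ^ 2 ≤ C * ‖χ‖ ^ 2) :
    ‖χ‖ ^ 2 ≤ 2 * C * (Col : ℝ) ^ 2 * ∑ i, m i ^ 2 * ‖w i‖ ^ 2 :=
  stmt_10_general χ χhat w m S Col C hC hrow hcol hsum hstab
end

section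
/- Suppose cond(P) := λ_max(P)/λ_min(P) ≤ C₂' < ∞ and ‖ψ_i⁰‖ ≤ C₁ H^{-1}. Then the localized basis functions satisfy ‖ψ_i − ψ_i^ℓ‖ ≤ C₁ H^{-1} θ^ℓ where θ = (cond(P)−1)/(cond(P)+1) < 1; in particular, writing θ = e^{-1/C₂} for some C₂ > 0 depending only on cond(P), ‖ψ_i − ψ_i^ℓ‖ ≤ C₁ H^{-1} e^{-ℓ/C₂}. -/
open Real

lemma le_mul_pow_of_le_pow_mul {e : ℕ → ℝ} {θ r R : ℝ} (hθ : 0 ≤ θ)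
    (he : ∀ ℓ, e ℓ ≤ θ ^ ℓ * r) (hr : r ≤ R) (ℓ : ℕ) : e ℓ ≤ R * θ ^ ℓ :=
  calc e ℓ ≤ θ ^ ℓ * r := he ℓ
    _ ≤ θ ^ ℓ * R := mul_le_mul_of_nonneg_left hr (pow_nonneg hθ ℓ)
    _ = R * θ ^ ℓ := mul_comm _ _

lemma sub_one_div_add_one_pos {κ : ℝ} (hκ : 1 < κ) : 0 < (κ - 1) / (κ + 1) :=
  div_pos (by linarith) (by linarith)

lemma sub_one_div_add_one_lt_one {κ : ℝ} (hκ : -1 < κ) : (κ - 1) / (κ + 1) < 1 := by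
  rw [div_lt_one (by linarith)]
  linarith

lemma exp_neg_one_div_pow (C : ℝ) (ℓ : ℕ) : exp (-(1 / C)) ^ ℓ = exp (-(ℓ : ℝ) / C) := by
  rw [← exp_nat_mul]
  ring_nf

lemma exists_pos_eq_exp_neg_one_div {θ : ℝ} (h₀ : 0 < θ) (h₁ : θ < 1) :
    ∃ C : ℝ, 0 < C ∧ θ = exp (-(1 / C)) := by
  have hlog : log θ < 0 := log_neg h₀ h₁
  refine ⟨-1 / log θ, div_pos_of_neg_of_neg (by norm_num) hlog, ?_⟩
  rw [one_div_div, div_neg, div_one, neg_neg, exp_log h₀]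

theorem stmt_17_general {V : Type*} [NormedAddCommGroup V]
    (ψi : V) (ψloc : ℕ → V) (ψ0 : V) (κ C₁ Hm : ℝ)
    (hκ : 1 < κ)
    (hcontr : ∀ ℓ : ℕ, ‖ψi - ψloc ℓ‖ ≤ ((κ - 1) / (κ + 1)) ^ ℓ * ‖ψ0‖)
    (hψ0 : ‖ψ0‖ ≤ C₁ * Hm⁻¹) :
    (∀ ℓ : ℕ, ‖ψi - ψloc ℓ‖ ≤ C₁ * Hm⁻¹ * ((κ - 1) / (κ + 1)) ^ ℓ) ∧
    0 ≤ (κ - 1) / (κ + 1) ∧ (κ - 1) / (κ + 1) < 1 ∧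
    ∃ C₂ : ℝ, 0 < C₂ ∧ (κ - 1) / (κ + 1) = Real.exp (-(1 / C₂)) ∧
      ∀ ℓ : ℕ, ‖ψi - ψloc ℓ‖ ≤ C₁ * Hm⁻¹ * Real.exp (-(ℓ : ℝ) / C₂) := by
  have hθ₀ := sub_one_div_add_one_pos hκ
  have hθ₁ := sub_one_div_add_one_lt_one (κ := κ) (by linarith)
  have hdecay := le_mul_pow_of_le_pow_mul hθ₀.le hcontr hψ0
  obtain ⟨C₂, hC₂, hθ⟩ := exists_pos_eq_exp_neg_one_div hθ₀ hθ₁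
  refine ⟨hdecay, hθ₀.le, hθ₁, C₂, hC₂, hθ, fun ℓ => ?_⟩
  rw [← exp_neg_one_div_pow, ← hθ]
  exact hdecay ℓ

/-- Exponential decay of the localization error (Theorem 3.3): from the
contraction estimate `‖ψ_i - ψ_i^ℓ‖ ≤ θ^ℓ ‖ψ_i⁰‖` with
`θ = (κ-1)/(κ+1) ∈ [0,1)` (`κ = cond(P) > 1`) and `‖ψ_i⁰‖ ≤ C₁ H⁻¹`, one gets
`‖ψ_i - ψ_i^ℓ‖ ≤ C₁ H⁻¹ θ^ℓ = C₁ H⁻¹ e^{-ℓ/C₂}` with `θ = e^{-1/C₂}`. -/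
theorem stmt_17 {V : Type*} [NormedAddCommGroup V]
    (ψi : V) (ψloc : ℕ → V) (ψ0 : V) (κ C₁ Hm : ℝ)
    (hκ : 1 < κ) (hH : 0 < Hm)
    (hcontr : ∀ ℓ : ℕ, ‖ψi - ψloc ℓ‖ ≤ ((κ - 1) / (κ + 1)) ^ ℓ * ‖ψ0‖)
    (hψ0 : ‖ψ0‖ ≤ C₁ * Hm⁻¹) :
    (∀ ℓ : ℕ, ‖ψi - ψloc ℓ‖ ≤ C₁ * Hm⁻¹ * ((κ - 1) / (κ + 1)) ^ ℓ) ∧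
    0 ≤ (κ - 1) / (κ + 1) ∧ (κ - 1) / (κ + 1) < 1 ∧
    ∃ C₂ : ℝ, 0 < C₂ ∧ (κ - 1) / (κ + 1) = Real.exp (-(1 / C₂)) ∧
      ∀ ℓ : ℕ, ‖ψi - ψloc ℓ‖ ≤ C₁ * Hm⁻¹ * Real.exp (-(ℓ : ℝ) / C₂) :=
  stmt_17_general ψi ψloc ψ0 κ C₁ Hm hκ hcontr hψ0
end
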